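/- If a vertex-weighted graph with strictly positive weights realizes on four pairwise non-adjacent ports the even-parity language L_SCU = {x ∈ {0,1}⁴ : x₁+x₂+x₃+x₄ even} via its maximum-weight independent sets, then the graph has at least 8 vertices (at least 4 ancillas). -/
import Mathlib


open Finset
open scoped Classical

section Framework

variable {V : Type*} {ι : Type*}

/-- An independent set of a simple graph, given as a `Finset` of vertices. -/
def IsIndepSet' (G : SimpleGraph V) (S : Finset V) : Prop :=
  ∀ i ∈ S, ∀ j ∈ S, ¬ G.Adj i j

/-- Total weight of a finite set of vertices. -/
noncomputable def wt (Δ : V → ℝ) (S : Finset V) : ℝ := ∑ v ∈ S, Δ v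

/-- `S` is a maximum-weight independent set of `G` with weights `Δ`. -/
def IsMWIS (G : SimpleGraph V) (Δ : V → ℝ) (S : Finset V) : Prop :=
  IsIndepSet' G S ∧ ∀ T : Finset V, IsIndepSet' G T → wt Δ T ≤ wt Δ S

/-- Indicator vector recording which ports are contained in `S`. -/
noncomputable def portInd (ports : ι → V) (S : Finset V) : ι → Bool :=
  fun i => if ports i ∈ S then true else false

/-- The weighted graph `G` with designated `ports` realizes the language `L`:
the map from maximum-weight independent sets to port indicator vectors is a
bijection onto `L`. -/
def Realizes (G : SimpleGraph V) (Δ : V → ℝ) (ports : ι → V)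
    (L : Set (ι → Bool)) : Prop :=
  (∀ S, IsMWIS G Δ S → portInd ports S ∈ L) ∧
  (∀ x ∈ L, ∃ S, IsMWIS G Δ S ∧ portInd ports S = x) ∧
  (∀ S T, IsMWIS G Δ S → IsMWIS G Δ T →
    portInd ports S = portInd ports T → S = T)

/-- A maximal independent set: no vertex can be added while staying independent. -/
def IsMaxlIndep (G : SimpleGraph V) (S : Finset V) : Prop :=
  IsIndepSet' G S ∧ ∀ v ∉ S, ¬ IsIndepSet' G (insert v S)

end Framework

/-- The even-parity (surface code) language on four letters:
`{0000, 1100, 0011, 1001, 0110, 0101, 1010, 1111}`. -/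
def LSCU : Set (Fin 4 → Bool) :=
  {x | Even ((x 0).toNat + (x 1).toNat + (x 2).toNat + (x 3).toNat)}

lemma mwis_neighbor_of_not_mem {V : Type} (G : SimpleGraph V) (Δ : V → ℝ)
    (hΔ : ∀ v, 0 < Δ v) (S : Finset V) (hS : IsMWIS G Δ S) (v : V) (hv : v ∉ S) :
    ∃ u ∈ S, G.Adj v u := by
  by_contra h
  push_neg at h
  have hind : IsIndepSet' G (insert v S) := by
    intro a ha b hb hadj
    rw [Finset.mem_insert] at ha hb
    obtain rfl | ha := ha
    · obtain rfl | hb := hb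
      · exact G.irrefl hadj
      · exact h _ hb hadj
    · obtain rfl | hb := hb
      · exact h _ ha hadj.symm
      · exact hS.1 a ha b hb hadj
  have hle := hS.2 _ hind
  simp only [wt, Finset.sum_insert hv] at hle
  have := hΔ v
  linarith

/-- Any vertex-weighted graph with strictly positive weights
realizing the even-parity language on four pairwise non-adjacent ports has at
least 8 vertices (at least 4 ancillas). -/
theorem surface_code_vertex_complex_needs_eight_atoms (V : Type) [Fintype V]
    (G : SimpleGraph V) (Δ : V → ℝ) (p : Fin 4 → V)
    (hΔ : ∀ v, 0 < Δ v) (hp : Function.Injective p)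
    (hnadj : ∀ i j : Fin 4, i ≠ j → ¬ G.Adj (p i) (p j))
    (hreal : Realizes G Δ p LSCU) :
    8 ≤ Fintype.card V := by
  classical
  have hmem : ∀ k l : Fin 4, k ≠ l →
      (fun i : Fin 4 => decide (i ≠ k ∧ i ≠ l)) ∈ LSCU := by
    have h : ∀ k l : Fin 4, k ≠ l →
        Even ((decide ((0:Fin 4) ≠ k ∧ (0:Fin 4) ≠ l)).toNat +
              (decide ((1:Fin 4) ≠ k ∧ (1:Fin 4) ≠ l)).toNat +
              (decide ((2:Fin 4) ≠ k ∧ (2:Fin 4) ≠ l)).toNat +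
              (decide ((3:Fin 4) ≠ k ∧ (3:Fin 4) ≠ l)).toNat) := by decide
    exact h
  have hgood : ∀ q : Fin 4 × Fin 4, ∃ u : V, q.1 ≠ q.2 →
      (G.Adj (p q.1) u ∧ (∀ i : Fin 4, i ≠ q.1 → i ≠ q.2 → ¬ G.Adj (p i) u) ∧
        ∀ j : Fin 4, u ≠ p j) := by
    rintro ⟨k, l⟩
    by_cases hkl : k = l
    · exact ⟨p 0, fun h => absurd hkl h⟩
    · obtain ⟨S, hS, hind⟩ := hreal.2.1 _ (hmem k l hkl)
      have hk : p k ∉ S := by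
        intro hkS
        have h := congrFun hind k
        simp [portInd, hkS] at h
      obtain ⟨u, huS, hadj⟩ := mwis_neighbor_of_not_mem G Δ hΔ S hS (p k) hk
      refine ⟨u, fun _ => ⟨hadj, ?_, ?_⟩⟩
      · intro i hik hil hiadj
        have hiS : p i ∈ S := by
          by_contra hiS
          have h := congrFun hind i
          simp [portInd, hiS, hik, hil] at h
        exact hS.1 (p i) hiS u huS hiadj
      · intro j huj
        subst huj
        rcases eq_or_ne k j with rfl | hkj
        · exact G.irrefl hadj
        · exact hnadj k j hkj hadj
  choose f hf using hgood
  set D : Finset (Fin 4 × Fin 4) := Finset.univ.filter (fun q => q.1 ≠ q.2) with hD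
  have hDmem : ∀ q : Fin 4 × Fin 4, q ∈ D → q.1 ≠ q.2 := by
    intro q hq
    exact (Finset.mem_filter.mp hq).2
  have hDcard : D.card = 12 := by rw [hD]; decide
  have key : ∀ q q' : Fin 4 × Fin 4, q.1 ≠ q.2 → q'.1 ≠ q'.2 → f q = f q' →
      q.1 ≠ q'.1 → q'.1 = q.2 ∧ q.1 = q'.2 := by
    intro q q' hq hq' hff hne
    obtain ⟨ha, hb, -⟩ := hf q hq
    obtain ⟨ha', hb', -⟩ := hf q' hq'
    rw [hff] at ha hb
    constructor
    · by_contra h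
      exact hb q'.1 (Ne.symm hne) h ha'
    · by_contra h
      exact hb' q.1 hne h ha
  have hfib : ∀ u ∈ D.image f, (D.filter fun q => f q = u).card ≤ 3 := by
    intro u hu
    obtain ⟨q₀, hq₀D, hq₀⟩ := Finset.mem_image.mp hu
    by_cases hex : ∃ q' ∈ D.filter (fun q => f q = u), q'.1 ≠ q₀.1
    · obtain ⟨q', hq'F, hne⟩ := hex
      have hq'D := (Finset.mem_filter.mp hq'F).1
      have hq'f := (Finset.mem_filter.mp hq'F).2
      have hk0' := key q₀ q' (hDmem _ hq₀D) (hDmem _ hq'D) (hq₀.trans hq'f.symm) (Ne.symm hne)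
      have hsub : D.filter (fun q => f q = u) ⊆ {q₀, q'} := by
        intro q'' hq''F
        have hq''D := (Finset.mem_filter.mp hq''F).1
        have hq''f := (Finset.mem_filter.mp hq''F).2
        rcases eq_or_ne q''.1 q₀.1 with h1 | h1
        · rcases eq_or_ne q'' q₀ with rfl | hne2
          · exact Finset.mem_insert_self _ _
          · have hk'' := key q'' q' (hDmem _ hq''D) (hDmem _ hq'D)
              (hq''f.trans hq'f.symm) (h1 ▸ Ne.symm hne)
            have : q'' = q₀ := Prod.ext h1 (hk''.1 ▸ hk0'.1.symm ▸ rfl)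
            exact absurd this hne2
        · have hk'' := key q₀ q'' (hDmem _ hq₀D) (hDmem _ hq''D)
            (hq₀.trans hq''f.symm) (Ne.symm h1)
          have : q'' = q' := Prod.ext (hk''.1.trans hk0'.1.symm) (hk''.2.symm.trans hk0'.2)
          rw [this]
          exact Finset.mem_insert_of_mem (Finset.mem_singleton_self _)
      calc (D.filter fun q => f q = u).card ≤ ({q₀, q'} : Finset (Fin 4 × Fin 4)).card :=
            Finset.card_le_card hsub
        _ ≤ 2 := (Finset.card_insert_le _ _).trans (by simp)
        _ ≤ 3 := by norm_num
    · push_neg at hex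
      have hsub : D.filter (fun q => f q = u) ⊆
          Finset.univ.filter (fun q : Fin 4 × Fin 4 => q.1 = q₀.1 ∧ q.2 ≠ q₀.1) := by
        intro q hqF
        have h1 := hex q hqF
        have hqD := (Finset.mem_filter.mp hqF).1
        refine Finset.mem_filter.mpr ⟨Finset.mem_univ _, h1, ?_⟩
        rw [← h1]
        exact Ne.symm (hDmem _ hqD)
      have hcard3 : ∀ k : Fin 4,
          (Finset.univ.filter fun q : Fin 4 × Fin 4 => q.1 = k ∧ q.2 ≠ k).card = 3 := by
        decide
      calc (D.filter fun q => f q = u).card ≤ _ := Finset.card_le_card hsub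
        _ = 3 := hcard3 q₀.1
  have h12 : D.card ≤ 3 * (D.image f).card := Finset.card_le_mul_card_image D 3 hfib
  have hA : 4 ≤ (D.image f).card := by omega
  have hP : (Finset.univ.image p).card = 4 := by
    rw [Finset.card_image_of_injective _ hp]
    simp
  have hdisj : Disjoint (D.image f) (Finset.univ.image p) := by
    rw [Finset.disjoint_left]
    intro u hu hup
    obtain ⟨q, hqD, rfl⟩ := Finset.mem_image.mp hu
    obtain ⟨j, -, hj⟩ := Finset.mem_image.mp hup
    exact (hf q (hDmem _ hqD)).2.2 j hj.symm
  have hcu := Finset.card_union_of_disjoint hdisj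
  have hle : (D.image f ∪ Finset.univ.image p).card ≤ Fintype.card V :=
    (Finset.card_le_univ _)
  omega
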